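/- Let R be a local ring. Every matrix A in GL_n(R) with det(A) = 1 is a product of elementary transvections (matrices differing from the identity only in one off-diagonal entry). -/

import Mathlib

/-!
Over a local ring every column of an invertible matrix contains a unit, since modulo the maximal
ideal the determinant is still nonzero. At most two row transvections turn such a unit into a `1`
in the bottom-right corner. Writing the matrix as `fromBlocks A B C 1`, the Schur factorisation
`fromBlocks 1 B 0 1 * fromBlocks (A - B * C) 0 0 1 * fromBlocks 1 0 C 1` has unitriangular outer
factors, which are products of transvections, and `A - B * C` has determinant `1`, so induction
on the size finishes the proof.
-/

namespace Matrix

def transvectionSubmonoid (n R : Type*) [Fintype n] [DecidableEq n] [CommRing R] :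
    Submonoid (Matrix n n R) where
  carrier :=
    {M | ∃ L : List (TransvectionStruct n R), M = (L.map TransvectionStruct.toMatrix).prod}
  mul_mem' := by
    rintro _ _ ⟨L, rfl⟩ ⟨L', rfl⟩
    exact ⟨L ++ L', by simp⟩
  one_mem' := ⟨[], rfl⟩

variable {R : Type*} [CommRing R]

namespace transvectionSubmonoid

open TransvectionStruct

variable {m n p : Type*} [Fintype m] [DecidableEq m] [Fintype n] [DecidableEq n]
  [Fintype p] [DecidableEq p]

theorem transvection_mem {i j : n} (hij : i ≠ j) (c : R) :
    transvection i j c ∈ transvectionSubmonoid n R :=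
  ⟨[⟨i, j, hij, c⟩], by simp⟩

theorem det_eq_one {M : Matrix n n R} (hM : M ∈ transvectionSubmonoid n R) : M.det = 1 := by
  obtain ⟨L, rfl⟩ := hM
  exact det_toMatrix_prod L

theorem mem_of_mul_mem {P M : Matrix n n R} (hP : P ∈ transvectionSubmonoid n R)
    (hPM : P * M ∈ transvectionSubmonoid n R) : M ∈ transvectionSubmonoid n R := by
  obtain ⟨L, rfl⟩ := hP
  have hinv : (L.reverse.map (toMatrix ∘ TransvectionStruct.inv)).prod ∈
      transvectionSubmonoid n R :=
    ⟨L.reverse.map TransvectionStruct.inv, by rw [List.map_map]⟩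
  have := mul_mem hinv hPM
  rwa [← Matrix.mul_assoc, reverse_inv_prod_mul_prod, Matrix.one_mul] at this

theorem reindex_mem {M : Matrix n n R} (hM : M ∈ transvectionSubmonoid n R) (e : n ≃ p) :
    reindexAlgEquiv R R e M ∈ transvectionSubmonoid p R := by
  obtain ⟨L, rfl⟩ := hM
  exact ⟨L.map (reindexEquiv e), by rw [List.map_map, toMatrix_reindexEquiv_prod]⟩

theorem fromBlocks_zero_zero_one_mem {A : Matrix m m R} (hA : A ∈ transvectionSubmonoid m R) :
    fromBlocks A 0 0 (1 : Matrix p p R) ∈ transvectionSubmonoid (m ⊕ p) R := by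
  obtain ⟨L, rfl⟩ := hA
  refine ⟨L.map (sumInl p), ?_⟩
  simpa [List.map_map] using
    (sumInl_toMatrix_prod_mul (M := 1) (L := L) (N := (1 : Matrix p p R))).symm

theorem fromBlocks_one_zero_one_mem (B : Matrix m p R) :
    fromBlocks 1 B 0 1 ∈ transvectionSubmonoid (m ⊕ p) R := by
  induction B using Matrix.induction_on' with
  | h_zero => simp
  | h_add B B' hB hB' =>
    convert mul_mem hB hB' using 1
    simp [fromBlocks_multiply, add_comm]
  | h_std_basis i j c =>
    convert transvection_mem (Sum.inl_ne_inr (a := i) (b := j)) c using 1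
    ext (a | a) (b | b) <;> simp [transvection, single_apply, one_apply]

theorem fromBlocks_one_zero_mem (C : Matrix p m R) :
    fromBlocks 1 0 C 1 ∈ transvectionSubmonoid (m ⊕ p) R := by
  simpa [coe_reindexAlgEquiv, fromBlocks_submatrix_sum_swap_sum_swap] using
    reindex_mem (fromBlocks_one_zero_one_mem C) (Equiv.sumComm p m)

theorem fromBlocks_mem_of_sub_mul_mem {A : Matrix m m R} (B : Matrix m p R) (C : Matrix p m R)
    (hS : A - B * C ∈ transvectionSubmonoid m R) :
    fromBlocks A B C 1 ∈ transvectionSubmonoid (m ⊕ p) R := by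
  let _ : Invertible (1 : Matrix p p R) := invertibleOne
  rw [fromBlocks_eq_of_invertible₂₂]
  simpa using mul_mem (mul_mem (fromBlocks_one_zero_one_mem B) (fromBlocks_zero_zero_one_mem hS))
    (fromBlocks_one_zero_mem C)

end transvectionSubmonoid

variable {n : Type*} [Fintype n] [DecidableEq n]

theorem exists_isUnit_apply_of_isUnit_det [IsLocalRing R] {M : Matrix n n R}
    (hM : IsUnit M.det) (k : n) : ∃ i, IsUnit (M i k) := by
  by_contra! h
  have hcol : ∀ i, (IsLocalRing.residue R).mapMatrix M i k = 0 := fun i =>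
    (IsLocalRing.residue_eq_zero_iff _).2 ((IsLocalRing.mem_maximalIdeal _).2 (h i))
  apply (IsLocalRing.residue_ne_zero_iff_isUnit M.det).2 hM
  rw [RingHom.map_det, det_eq_zero_of_column_eq_zero k hcol]

theorem transvection_mul_apply_eq_one {M : Matrix n n R} {i k : n} (hu : IsUnit (M i k))
    (t : n) :
    (transvection t i ((1 - M t k) * ↑hu.unit⁻¹) * M) t k = 1 := by
  rw [transvection_mul_apply_same, mul_assoc, hu.val_inv_mul, mul_one, add_sub_cancel]

namespace transvectionSubmonoid

theorem exists_mul_apply_eq_one_of_ne {M : Matrix n n R} {i k t : n} (hu : IsUnit (M i k))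
    (hti : t ≠ i) : ∃ P ∈ transvectionSubmonoid n R, (P * M) t k = 1 :=
  ⟨_, transvection_mem hti _, transvection_mul_apply_eq_one hu t⟩

theorem exists_mul_apply_eq_one [IsLocalRing R] {M : Matrix n n R} (hM : M.det = 1) (k : n) :
    ∃ P ∈ transvectionSubmonoid n R, (P * M) k k = 1 := by
  obtain ⟨i, hi⟩ := exists_isUnit_apply_of_isUnit_det (hM ▸ isUnit_one) k
  by_cases hik : k = i
  · subst hik
    by_cases hn : ∃ j, j ≠ k
    · obtain ⟨j, hj⟩ := hn
      obtain ⟨T, hT, hTM⟩ := exists_mul_apply_eq_one_of_ne hi hj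
      obtain ⟨P, hP, hPTM⟩ := exists_mul_apply_eq_one_of_ne (hTM ▸ isUnit_one) hj.symm
      exact ⟨P * T, mul_mem hP hT, by rwa [Matrix.mul_assoc]⟩
    · push Not at hn
      let _ : Unique n := ⟨⟨k⟩, hn⟩
      exact ⟨1, one_mem _, by rw [Matrix.one_mul, ← hM, det_unique]; rfl⟩
  · exact exists_mul_apply_eq_one_of_ne hi hik

end transvectionSubmonoid

theorem mem_transvectionSubmonoid_of_det_eq_one [IsLocalRing R] :
    ∀ {n : ℕ} {M : Matrix (Fin n) (Fin n) R}, M.det = 1 →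
      M ∈ transvectionSubmonoid (Fin n) R
  | 0, M, _ => ⟨[], Subsingleton.elim _ _⟩
  | n + 1, M, hM => by
    let e : Fin n ⊕ Fin 1 ≃ Fin (n + 1) := finSumFinEquiv
    let N := reindexAlgEquiv R R e.symm M
    have hN : N.det = 1 := by rw [det_reindexAlgEquiv, hM]
    obtain ⟨P, hP, hPN⟩ := transvectionSubmonoid.exists_mul_apply_eq_one hN (Sum.inr 0)
    have h₂₂ : (P * N).toBlocks₂₂ = 1 := by
      ext i j
      rw [Subsingleton.elim i 0, Subsingleton.elim j 0, one_apply_eq]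
      exact hPN
    have hPN_det : (P * N).det = 1 := by
      rw [det_mul, transvectionSubmonoid.det_eq_one hP, hN, one_mul]
    rw [← fromBlocks_toBlocks (P * N), h₂₂, det_fromBlocks_one₂₂] at hPN_det
    have hPN_mem : P * N ∈ transvectionSubmonoid _ R := by
      rw [← fromBlocks_toBlocks (P * N), h₂₂]
      exact transvectionSubmonoid.fromBlocks_mem_of_sub_mul_mem _ _
        (mem_transvectionSubmonoid_of_det_eq_one hPN_det)
    simpa [N] using transvectionSubmonoid.reindex_mem
      (transvectionSubmonoid.mem_of_mul_mem hP hPN_mem) e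

end Matrix

/-- Over a local ring `R`, every matrix `A ∈ GL_n(R)` with
`det A = 1` is a product of elementary transvections. -/
theorem stmt_0 {R : Type*} [CommRing R] [IsLocalRing R] {n : ℕ}
    (A : Matrix (Fin n) (Fin n) R) (hA : A.det = 1) :
    ∃ L : List (Matrix.TransvectionStruct (Fin n) R),
      A = (L.map Matrix.TransvectionStruct.toMatrix).prod :=
  Matrix.mem_transvectionSubmonoid_of_det_eq_one hA
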